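/- Consider the r-antenna no-CSI SIMO Rayleigh-fading channel in its equivalent exponential form. Fix E > 0 and integers N ≥ 1 and M ≥ 1. There exists an (E, M, ε')-code for this channel whose maximal error probability ε' satisfies ε' ≤ E[ min{ 1, (M−1)·P[ Ḡ_N ≥ (1 + E/N)·G_N | G_N ] } ], where G_N and Ḡ_N are independent random variables each with the Gamma(rN,1) distribution; that is, ε' ≤ ∫ min{1, (M−1)·P[Ḡ_N ≥ (1+E/N)·g]} dμ(g) where μ is the Gamma(rN,1) law of G_N. -/

import Mathlib

/-
Pulse-position coding: codeword `j` spends its whole budget `E` evenly on the `j`-th block of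
`N` channel uses, and the decoder picks the block with the largest received energy. The `rN`
received coordinates of a block are independent unit exponentials scaled by `1 + E / N` in the
active block and by `1` elsewhere, so the block energies are independent, the transmitted one
distributed as `(1 + E / N) G` and the others as `G`, with `G ~ Gamma(rN, 1)` (a sum of `m`
i.i.d. unit exponentials is `Gamma(m, 1)`, by induction from `Gamma(a, 1) ∗ Exp(1) =
Gamma(a + 1, 1)`). The decoder errs only if another block energy reaches the transmitted one;
conditioning on the latter and taking the union bound over the `M - 1` competitors, capped at
`1`, gives the RCU integral.
-/

open MeasureTheory ProbabilityTheory

/-- `μ` is the countable product of the probability measures `ν i`: it is a probability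
measure giving every finite-dimensional cylinder set the product of the coordinate
probabilities. -/
def IsPiNat {Y : Type*} [MeasurableSpace Y] (ν : ℕ → Measure Y) (μ : Measure (ℕ → Y)) : Prop :=
  IsProbabilityMeasure μ ∧
    ∀ (s : Finset ℕ) (A : ℕ → Set Y), (∀ i, MeasurableSet (A i)) →
      μ {y | ∀ i ∈ s, y i ∈ A i} = ∏ i ∈ s, ν i (A i)

/-- The output law of the `r`-antenna no-CSI SIMO Rayleigh-fading channel in its equivalent
exponential form: given input symbol `x`, the `r` output coordinates are independent, each
distributed as `(1 + x) · S` with `S` exponential of mean `1`. -/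
noncomputable def simoLaw (r : ℕ) (x : ℝ) : Measure (Fin r → ℝ) :=
  Measure.pi fun _ => (expMeasure 1).map (fun s => (1 + x) * s)

/-- An `(E, M, ε)` code for the `r`-antenna no-CSI SIMO Rayleigh-fading channel in its
equivalent exponential form: `M` codewords (sequences of nonnegative input symbols), each of
total cost (= sum of entries) at most `E`, and a measurable decoder whose error probability
under the output distribution induced by each codeword is at most `ε`. -/
structure SimoCode (r : ℕ) (E : ℝ) (M : ℕ) (ε : ℝ) where
  enc : Fin M → ℕ → ℝ
  enc_nonneg : ∀ j i, 0 ≤ enc j i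
  dec : (ℕ → Fin r → ℝ) → Fin M
  meas_dec : Measurable dec
  cost : ∀ j, (∑' i, ENNReal.ofReal (enc j i)) ≤ ENNReal.ofReal E
  err : ∀ (j : Fin M) (μ : Measure (ℕ → Fin r → ℝ)),
      IsPiNat (fun i => simoLaw r (enc j i)) μ → μ {y | dec y ≠ j} ≤ ENNReal.ofReal ε


open Set
open scoped ENNReal

namespace ProbabilityTheory

lemma gammaPDF_mul_gammaPDF_one_of_mem_Icc {a r x z : ℝ} (ha : 0 < a) (hr : 0 < r)
    (hx : x ∈ Icc 0 z) :
    gammaPDF a r x * gammaPDF 1 r (-x + z) =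
      ENNReal.ofReal (r ^ (a + 1) / Real.Gamma a * Real.exp (-(r * z)) * x ^ (a - 1)) := by
  have := Real.Gamma_pos_of_pos ha
  have := hx.1
  have hexp : Real.exp (-(r * x)) * Real.exp (-(r * (-x + z))) = Real.exp (-(r * z)) := by
    rw [← Real.exp_add]
    congr 1
    ring
  rw [gammaPDF_of_nonneg hx.1, gammaPDF_of_nonneg (by linarith [hx.2]),
    ← ENNReal.ofReal_mul (by positivity), Real.rpow_add hr, ← hexp]
  simp only [Real.rpow_one, Real.Gamma_one, sub_self, Real.rpow_zero, div_one, mul_one]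
  congr 1
  ring

lemma gammaPDF_mul_gammaPDF_of_notMem_Icc {a b r s x z : ℝ} (hx : x ∉ Icc 0 z) :
    gammaPDF a r x * gammaPDF b s (-x + z) = 0 := by
  rcases not_and_or.1 hx with hx | hx
  · rw [gammaPDF_of_neg (not_le.1 hx), zero_mul]
  · rw [gammaPDF_of_neg (x := -x + z) (by linarith [not_le.1 hx]), mul_zero]

lemma gammaPDF_lconvolution_gammaPDF_one {a r : ℝ} (ha : 0 < a) (hr : 0 < r) :
    gammaPDF a r ⋆ₗ gammaPDF 1 r = gammaPDF (a + 1) r := by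
  ext z
  rw [lconvolution_def]
  rcases lt_or_ge z 0 with hz | hz
  · have hempty (x : ℝ) : x ∉ Icc 0 z := fun hx => (hx.1.trans hx.2).not_gt hz
    simp [gammaPDF_mul_gammaPDF_of_notMem_Icc (hempty _), gammaPDF_of_neg hz]
  set C := r ^ (a + 1) / Real.Gamma a * Real.exp (-(r * z))
  have hC : 0 ≤ C := by have := Real.Gamma_pos_of_pos ha; positivity
  have hpt (x : ℝ) : gammaPDF a r x * gammaPDF 1 r (-x + z) =
      (Icc 0 z).indicator (fun x => ENNReal.ofReal (C * x ^ (a - 1))) x := by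
    by_cases hx : x ∈ Icc 0 z
    · rw [indicator_of_mem hx, gammaPDF_mul_gammaPDF_one_of_mem_Icc ha hr hx]
    · rw [indicator_of_notMem hx, gammaPDF_mul_gammaPDF_of_notMem_Icc hx]
  have hint : IntegrableOn (fun x => C * x ^ (a - 1)) (Icc 0 z) :=
    ((intervalIntegrable_iff_integrableOn_Icc_of_le hz).1
      (intervalIntegral.intervalIntegrable_rpow' (by linarith))).const_mul C
  have hnonneg : 0 ≤ᵐ[volume.restrict (Icc 0 z)] fun x => C * x ^ (a - 1) :=
    (ae_restrict_iff' measurableSet_Icc).2 <|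
      ae_of_all _ fun x hx => mul_nonneg hC (Real.rpow_nonneg hx.1 _)
  rw [lintegral_congr hpt, lintegral_indicator measurableSet_Icc,
    ← ofReal_integral_eq_lintegral_ofReal hint hnonneg, integral_Icc_eq_integral_Ioc,
    ← intervalIntegral.integral_of_le hz, intervalIntegral.integral_const_mul,
    integral_rpow (by left; linarith), gammaPDF_of_nonneg hz, Real.Gamma_add_one ha.ne',
    sub_add_cancel, add_sub_cancel_right, Real.zero_rpow ha.ne']
  congr 1
  simp only [C]
  field_simp
  ring

lemma gammaMeasure_conv_expMeasure {a r : ℝ} (ha : 0 < a) (hr : 0 < r) :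
    gammaMeasure a r ∗ expMeasure r = gammaMeasure (a + 1) r := by
  have hmeas (b : ℝ) : Measurable (gammaPDF b r) := (measurable_gammaPDFReal b r).ennreal_ofReal
  rw [expMeasure, gammaMeasure, gammaMeasure,
    conv_withDensity_eq_lconvolution (hmeas a) (hmeas 1), gammaPDF_lconvolution_gammaPDF_one ha hr,
    gammaMeasure]

lemma map_sum_pi_expMeasure_fin {r : ℝ} (hr : 0 < r) (n : ℕ) :
    (Measure.pi fun _ : Fin (n + 1) => expMeasure r).map (fun x => ∑ i, x i) =
      gammaMeasure (n + 1) r := by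
  have := isProbabilityMeasure_expMeasure hr
  induction n with
  | zero =>
    have hsum : (fun x : Fin 1 → ℝ => ∑ i, x i) = MeasurableEquiv.piUnique (fun _ => ℝ) := by
      ext x
      simp
    rw [hsum, (measurePreserving_piUnique _).map_eq, CharP.cast_eq_zero, zero_add, expMeasure]
  | succ n ih =>
    have := isProbabilityMeasure_gammaMeasure (a := n + 1) (by positivity) hr
    have hsplit :=
      measurePreserving_piFinSuccAbove (fun _ : Fin (n + 2) => expMeasure r) (Fin.last _)
    have hsum : (fun x : Fin (n + 2) → ℝ => ∑ i, x i) =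
        (fun p : ℝ × ℝ => p.1 + p.2) ∘ Prod.map id (fun y : Fin (n + 1) → ℝ => ∑ i, y i) ∘
          MeasurableEquiv.piFinSuccAbove (fun _ => ℝ) (Fin.last _) := by
      ext x
      simp [Fin.sum_univ_castSucc, Fin.init, add_comm]
    rw [hsum, ← Measure.map_map (by fun_prop) (by fun_prop),
      ← Measure.map_map (by fun_prop) (by fun_prop), hsplit.map_eq,
      ← Measure.map_prod_map _ _ measurable_id (by fun_prop), Measure.map_id, ih, ← Measure.conv,
      Measure.conv_comm, gammaMeasure_conv_expMeasure (by positivity) hr, Nat.cast_add_one]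

lemma map_sum_pi_expMeasure {ι : Type*} [Fintype ι] [Nonempty ι] {r : ℝ} (hr : 0 < r) :
    (Measure.pi fun _ : ι => expMeasure r).map (fun x => ∑ i, x i) =
      gammaMeasure (Fintype.card ι) r := by
  have := isProbabilityMeasure_expMeasure hr
  obtain ⟨n, hn⟩ := Nat.exists_eq_add_one.2 (Fintype.card_pos (α := ι))
  let e : Fin (n + 1) ≃ ι := (finCongr hn.symm).trans (Fintype.equivFin ι).symm
  have hsum : (fun x : ι → ℝ => ∑ i, x i) ∘ MeasurableEquiv.piCongrLeft (fun _ => ℝ) e =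
      fun x => ∑ i, x i := by
    ext x
    simp [MeasurableEquiv.coe_piCongrLeft, ← e.sum_comp, Equiv.piCongrLeft_apply_apply]
  rw [← (measurePreserving_piCongrLeft (fun _ : ι => expMeasure r) e).map_eq,
    Measure.map_map (by fun_prop) (by fun_prop), hsum, map_sum_pi_expMeasure_fin hr, hn,
    Nat.cast_add_one]

end ProbabilityTheory

namespace MeasureTheory.Measure

variable {ι X : Type*} [MeasurableSpace X]

lemma infinitePi_map_comp_of_injective {α : Type*} (μ : ι → Measure X)
    [∀ i, IsProbabilityMeasure (μ i)] {e : α → ι} (he : e.Injective) :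
    (infinitePi μ).map (fun x => x ∘ e) = infinitePi fun a => μ (e a) := by
  classical
  refine eq_infinitePi _ fun s t ht => ?_
  set T : ι → Set X := Function.extend e t fun _ => univ
  have hT (i : ι) : MeasurableSet (T i) := by
    by_cases hi : ∃ a, e a = i
    · obtain ⟨a, rfl⟩ := hi
      simpa [T, he.extend_apply] using ht a
    · simp [T, Function.extend_apply' _ _ _ hi]
  have hpre : (fun x : ι → X => x ∘ e) ⁻¹' (s : Set α).pi t =
      ((s.map ⟨e, he⟩ : Finset ι) : Set ι).pi T := by
    ext x
    simp [T, he.extend_apply]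
  rw [map_apply (by fun_prop) (.pi s.countable_toSet fun a _ => ht a), hpre,
    infinitePi_pi _ fun i _ => hT i, Finset.prod_map]
  simp [T, he.extend_apply]

lemma pi_map_curry {κ : Type*} [Fintype ι] [Fintype κ] (μ : ι → κ → Measure X)
    [∀ i j, IsProbabilityMeasure (μ i j)] :
    (Measure.pi fun p : ι × κ => μ p.1 p.2).map (MeasurableEquiv.curry ι κ X) =
      Measure.pi fun i => Measure.pi fun j => μ i j := by
  simpa only [infinitePi_eq_pi] using infinitePi_map_curry μ

end MeasureTheory.Measure

section IsPiNat

variable {Y : Type*} [MeasurableSpace Y] {ν : ℕ → Measure Y} [∀ i, IsProbabilityMeasure (ν i)]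
  {μ : Measure (ℕ → Y)}

lemma IsPiNat.eq_infinitePi (h : IsPiNat ν μ) : μ = Measure.infinitePi ν :=
  Measure.eq_infinitePi ν h.2

lemma IsPiNat.map_comp_of_injective {α : Type*} [Fintype α] (h : IsPiNat ν μ) {e : α → ℕ}
    (he : e.Injective) :
    μ.map (fun y => y ∘ e) = Measure.pi fun a => ν (e a) := by
  rw [h.eq_infinitePi, Measure.infinitePi_map_comp_of_injective ν he, Measure.infinitePi_eq_pi]

end IsPiNat

section MaxOfIndependent

variable {α : Type*} [LinearOrder α] [TopologicalSpace α] [OrderClosedTopology α]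
  [MeasurableSpace α] [OpensMeasurableSpace α] [SecondCountableTopology α]

lemma exists_measurable_argmax {X ι : Type*} [MeasurableSpace X] [MeasurableSpace ι] [Finite ι]
    [Nonempty ι] {f : ι → X → α} (hf : ∀ i, Measurable (f i)) :
    ∃ g : X → ι, Measurable g ∧ ∀ x i, f i x ≤ f (g x) x := by
  classical
  obtain ⟨σ, hσ⟩ := exists_surjective_nat ι
  have hmax (x : X) : ∃ n, ∀ i, f i x ≤ f (σ n) x := by
    obtain ⟨k, hk⟩ := Finite.exists_max (f · x)
    obtain ⟨n, rfl⟩ := hσ k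
    exact ⟨n, hk⟩
  -- Ties are broken by the first maximiser in the enumeration `σ`, which keeps `g` measurable.
  refine ⟨fun x => σ (Nat.find (hmax x)),
    Measurable.find (fun _ => measurable_const) (fun n => ?_) hmax, fun x => Nat.find_spec (hmax x)⟩
  simp only [ofPred_forall]
  exact .iInter fun i => measurableSet_le (hf i) (hf _)

lemma pi_exists_le_le_lintegral {n : ℕ} (μ : Fin (n + 1) → Measure α)
    [∀ k, IsProbabilityMeasure (μ k)] (j : Fin (n + 1)) :
    Measure.pi μ {t | ∃ k ≠ j, t j ≤ t k} ≤
      ∫⁻ x, min 1 (∑ k : Fin n, μ (j.succAbove k) (Ici x)) ∂μ j := by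
  have hB : MeasurableSet {p : α × (Fin n → α) | ∃ k, p.1 ≤ p.2 k} := by
    simp only [ofPred_exists]
    exact .iUnion fun k => measurableSet_le (by fun_prop) (by fun_prop)
  have hpre : {t : Fin (n + 1) → α | ∃ k ≠ j, t j ≤ t k} =
      MeasurableEquiv.piFinSuccAbove (fun _ => α) j ⁻¹' {p | ∃ k, p.1 ≤ p.2 k} := by
    ext t
    simp only [ne_eq, mem_ofPred_eq, mem_preimage, MeasurableEquiv.piFinSuccAbove_apply,
      Fin.insertNthEquiv_symm_apply, Fin.removeNth]
    constructor
    · rintro ⟨k, hk, h⟩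
      obtain ⟨z, rfl⟩ := Fin.exists_succAbove_eq hk
      exact ⟨z, h⟩
    · rintro ⟨z, h⟩
      exact ⟨_, Fin.succAbove_ne j z, h⟩
  rw [hpre, (measurePreserving_piFinSuccAbove μ j).measure_preimage hB.nullMeasurableSet,
    Measure.prod_apply hB]
  refine lintegral_mono fun x => le_min prob_le_one ?_
  have hunion : Prod.mk x ⁻¹' {p : α × (Fin n → α) | ∃ k, p.1 ≤ p.2 k} =
      ⋃ k, Function.eval k ⁻¹' Ici x := by
    ext v
    simp
  rw [hunion]
  refine (measure_iUnion_fintype_le _ _).trans_eq (Finset.sum_congr rfl fun k _ => ?_)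
  exact (measurePreserving_eval _ k).measure_preimage measurableSet_Ici.nullMeasurableSet

end MaxOfIndependent

lemma ofReal_integral_min_one_toReal {X : Type*} [MeasurableSpace X] {μ : Measure X}
    [IsFiniteMeasure μ] {f : X → ℝ≥0∞} (hf : AEMeasurable f μ) (hfin : ∀ x, f x ≠ ⊤) :
    ENNReal.ofReal (∫ x, min 1 (f x).toReal ∂μ) = ∫⁻ x, min 1 (f x) ∂μ := by
  have hmin (x : X) : min 1 (f x).toReal = (min 1 (f x)).toReal := by
    rw [ENNReal.toReal_min ENNReal.one_ne_top (hfin x), ENNReal.toReal_one]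
  simp_rw [hmin]
  rw [integral_toReal (by fun_prop)
      (ae_of_all _ fun x => (min_le_left _ _).trans_lt ENNReal.one_lt_top),
    ENNReal.ofReal_toReal]
  exact ((lintegral_mono fun x => min_le_left _ _).trans_lt (by simp [measure_lt_top])).ne

lemma pi_exists_ne_le_le_ofReal_integral {n : ℕ} {γ : Measure ℝ} [IsProbabilityMeasure γ]
    {c : ℝ} (μ : Fin (n + 1) → Measure ℝ) (j : Fin (n + 1)) (hj : μ j = γ.map (c * ·))
    (hk : ∀ k ≠ j, μ k = γ) :
    Measure.pi μ {t | ∃ k ≠ j, t j ≤ t k} ≤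
      ENNReal.ofReal (∫ g, min 1 (n * (γ (Ici (c * g))).toReal) ∂γ) := by
  have (k : Fin (n + 1)) : IsProbabilityMeasure (μ k) := by
    rcases eq_or_ne k j with rfl | hkj
    · exact hj ▸ Measure.isProbabilityMeasure_map (measurable_const_mul c).aemeasurable
    · exact hk k hkj ▸ inferInstance
  have htail : Measurable fun x => γ (Ici x) :=
    Antitone.measurable fun x y hxy => measure_mono (Ici_subset_Ici.2 hxy)
  calc Measure.pi μ {t | ∃ k ≠ j, t j ≤ t k}
      ≤ ∫⁻ x, min 1 (∑ k : Fin n, μ (j.succAbove k) (Ici x)) ∂μ j :=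
        pi_exists_le_le_lintegral μ j
    _ = ∫⁻ g, min 1 (n * γ (Ici (c * g))) ∂γ := by
      simp_rw [hk _ (Fin.succAbove_ne j _), Finset.sum_const, Finset.card_univ, Fintype.card_fin,
        nsmul_eq_mul]
      rw [hj, lintegral_map (measurable_const.min (htail.const_mul _)) (measurable_const_mul c)]
    _ = _ := by
      rw [← ofReal_integral_min_one_toReal (f := fun g => (n : ℝ≥0∞) * γ (Ici (c * g)))
        ((htail.comp (measurable_const_mul c)).const_mul _).aemeasurable
        fun g => ENNReal.mul_ne_top (by simp) (measure_ne_top _ _)]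
      simp [ENNReal.toReal_mul]

lemma simoLaw_eq_map (r : ℕ) (x : ℝ) :
    simoLaw r x = (Measure.pi fun _ : Fin r => expMeasure 1).map fun v a => (1 + x) * v a := by
  have := isProbabilityMeasure_expMeasure one_pos
  have (_ : Fin r) := (expMeasure 1).isProbabilityMeasure_map
    (measurable_const_mul (1 + x)).aemeasurable
  rw [simoLaw, Measure.pi_map_pi fun _ => (measurable_const_mul _).aemeasurable]

instance isProbabilityMeasure_simoLaw (r : ℕ) (x : ℝ) : IsProbabilityMeasure (simoLaw r x) := by
  have := isProbabilityMeasure_expMeasure one_pos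
  rw [simoLaw_eq_map]
  exact Measure.isProbabilityMeasure_map (Measurable.aemeasurable (by fun_prop))

lemma map_sum_pi_simoLaw (r N : ℕ) [NeZero r] [NeZero N] (x : ℝ) :
    (Measure.pi fun _ : Fin N => simoLaw r x).map (fun w => ∑ i, ∑ a, w i a) =
      (gammaMeasure ((r * N : ℕ) : ℝ) 1).map ((1 + x) * ·) := by
  have := isProbabilityMeasure_expMeasure one_pos
  have hpi : Measure.pi (fun _ : Fin N => simoLaw r x) =
      (Measure.pi fun _ : Fin N × Fin r => expMeasure 1).map
        fun z i a => (1 + x) * z (i, a) := by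
    simp_rw [simoLaw_eq_map]
    rw [← Measure.pi_map_pi fun _ => (Measurable.aemeasurable (by fun_prop)),
      ← Measure.pi_map_curry, Measure.map_map (by fun_prop) (by fun_prop)]
    rfl
  have hsum : (fun w : Fin N → Fin r → ℝ => ∑ i, ∑ a, w i a) ∘ (fun z i a => (1 + x) * z (i, a)) =
      ((1 + x) * ·) ∘ fun z : Fin N × Fin r → ℝ => ∑ p, z p := by
    ext z
    simp [Finset.mul_sum, Fintype.sum_prod_type]
  rw [hpi, Measure.map_map (by fun_prop) (by fun_prop), hsum,
    ← Measure.map_map (by fun_prop) (by fun_prop), map_sum_pi_expMeasure one_pos,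
    Fintype.card_prod, Fintype.card_fin, Fintype.card_fin, Nat.mul_comm]

noncomputable def blockCodeword (N : ℕ) (E : ℝ) (j m : ℕ) : ℝ :=
  if m / N = j then E / N else 0

section blockCodeword

variable {N : ℕ} {E : ℝ} {j : ℕ}

lemma blockCodeword_nonneg (hE : 0 ≤ E) (m : ℕ) : 0 ≤ blockCodeword N E j m := by
  unfold blockCodeword
  split_ifs <;> positivity

lemma blockCodeword_mul_add (k : ℕ) {i : ℕ} (hi : i < N) :
    blockCodeword N E j (k * N + i) = if k = j then E / N else 0 := by
  rw [blockCodeword, add_comm, Nat.add_mul_div_right _ _ (by omega), Nat.div_eq_of_lt hi,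
    zero_add]

lemma tsum_ofReal_blockCodeword [NeZero N] :
    ∑' m, ENNReal.ofReal (blockCodeword N E j m) = ENNReal.ofReal E := by
  rw [← (Nat.divModEquiv N).symm.tsum_eq, ENNReal.tsum_prod']
  simp only [Nat.divModEquiv_symm_apply, blockCodeword_mul_add _ (Fin.is_lt _), tsum_fintype]
  rw [tsum_eq_single j fun k hk => by simp [hk], if_pos rfl, Finset.sum_const, Finset.card_univ,
    Fintype.card_fin, nsmul_eq_mul, ← ENNReal.ofReal_natCast,
    ← ENNReal.ofReal_mul (by positivity), mul_div_cancel₀ _ (NeZero.ne (N : ℝ))]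

end blockCodeword

def blockEnergy (r N k : ℕ) (y : ℕ → Fin r → ℝ) : ℝ :=
  ∑ i : Fin N, ∑ a, y (k * N + i) a

lemma measurable_blockEnergy (r N k : ℕ) : Measurable (blockEnergy r N k) := by
  unfold blockEnergy
  fun_prop

lemma IsPiNat.map_blockEnergy {r N M : ℕ} [NeZero r] [NeZero N] {E : ℝ} {j : ℕ}
    {μ : Measure (ℕ → Fin r → ℝ)}
    (hμ : IsPiNat (fun m => simoLaw r (blockCodeword N E j m)) μ) :
    μ.map (fun y (k : Fin M) => blockEnergy r N k y) =
      Measure.pi fun k : Fin M =>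
        (gammaMeasure ((r * N : ℕ) : ℝ) 1).map ((1 + if (k : ℕ) = j then E / N else 0) * ·) := by
  have : IsProbabilityMeasure (gammaMeasure ((r * N : ℕ) : ℝ) 1) :=
    isProbabilityMeasure_gammaMeasure (by simp [Nat.pos_iff_ne_zero, NeZero.ne]) one_pos
  let e : Fin M × Fin N → ℕ := fun p => (Nat.divModEquiv N).symm (p.1, p.2)
  have he : e.Injective :=
    (Nat.divModEquiv N).symm.injective.comp (Fin.val_injective.prodMap Function.injective_id)
  have hblock (k : Fin M) :
      MeasurePreserving (fun w : Fin N → Fin r → ℝ => ∑ i, ∑ a, w i a)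
        (Measure.pi fun i => simoLaw r (blockCodeword N E j (k * N + i)))
        ((gammaMeasure ((r * N : ℕ) : ℝ) 1).map
          ((1 + if (k : ℕ) = j then E / N else 0) * ·)) := by
    refine ⟨by fun_prop, ?_⟩
    simp_rw [blockCodeword_mul_add _ (Fin.is_lt _)]
    exact map_sum_pi_simoLaw r N _
  have hcomp : (fun y (k : Fin M) => blockEnergy r N k y) =
      (fun w k => ∑ i, ∑ a, w k i a) ∘ MeasurableEquiv.curry (Fin M) (Fin N) (Fin r → ℝ) ∘
        fun y => y ∘ e := rfl
  rw [hcomp, ← Measure.map_map (by fun_prop) (by fun_prop),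
    ← Measure.map_map (by fun_prop) (by fun_prop), hμ.map_comp_of_injective he,
    Measure.pi_map_curry (fun k i => simoLaw r (blockCodeword N E j (e (k, i))))]
  exact (measurePreserving_pi _ _ hblock).map_eq

theorem simo_achievability_rcu
    (r : ℕ) (hr : 0 < r) (E : ℝ) (hE : 0 < E)
    (N : ℕ) (hN : 1 ≤ N) (M : ℕ) (hM : 1 ≤ M) :
    Nonempty (SimoCode r E M
      (∫ g, min 1 (((M : ℝ) - 1) *
          (gammaMeasure ((r * N : ℕ) : ℝ) 1 (Set.Ici ((1 + E / N) * g))).toReal)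
        ∂(gammaMeasure ((r * N : ℕ) : ℝ) 1))) := by
  obtain ⟨n, rfl⟩ : ∃ n, M = n + 1 := ⟨M - 1, by omega⟩
  have : NeZero r := ⟨hr.ne'⟩
  have : NeZero N := ⟨by omega⟩
  have : IsProbabilityMeasure (gammaMeasure ((r * N : ℕ) : ℝ) 1) :=
    isProbabilityMeasure_gammaMeasure (by positivity) one_pos
  set T : (ℕ → Fin r → ℝ) → Fin (n + 1) → ℝ := fun y k => blockEnergy r N k y
  have hT : Measurable T := measurable_pi_lambda _ fun k => measurable_blockEnergy r N k
  obtain ⟨dec, hdec, hmax⟩ := exists_measurable_argmax fun k => (measurable_pi_apply k).comp hT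
  refine ⟨⟨fun j => blockCodeword N E j, fun j => blockCodeword_nonneg hE.le, dec, hdec,
    fun j => tsum_ofReal_blockCodeword.le, fun j μ hμ => ?_⟩⟩
  have hsub : {y | dec y ≠ j} ⊆ T ⁻¹' {t | ∃ k ≠ j, t j ≤ t k} :=
    fun y hy => ⟨dec y, hy, hmax y j⟩
  calc μ {y | dec y ≠ j}
      ≤ μ.map T {t | ∃ k ≠ j, t j ≤ t k} :=
        (measure_mono hsub).trans (Measure.le_map_apply hT.aemeasurable _)
    _ ≤ _ := by
      rw [hμ.map_blockEnergy, Nat.cast_add_one, add_sub_cancel_right]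
      exact pi_exists_ne_le_le_ofReal_integral _ j (by simp) fun k hk => by simp [Fin.val_inj, hk]
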